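/- arXiv:2412.04298 — 4 statements merged into one kernel-verified Lean document; each statement's English description precedes it below -/
import Mathlib

section
/- For a regular parametrized surface x(u1,u2) in R^3 with unit normal N, the cross product of the partial derivatives of the Gauss map satisfies ∂N/∂u1 × ∂N/∂u2 = K · (∂x/∂u1 × ∂x/∂u2), where K is the Gaussian curvature. -/
open Matrix

/-- Euclidean norm of a vector in `Fin 3 → ℝ`. -/
noncomputable def norm3 (v : Fin 3 → ℝ) : ℝ := Real.sqrt (v ⬝ᵥ v)

lemma hd_comp {A : ℝ → Fin 3 → ℝ} {A' : Fin 3 → ℝ} {t : ℝ} (i : Fin 3)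
    (hA : HasDerivAt A A' t) : HasDerivAt (fun s => A s i) (A' i) t :=
  (ContinuousLinearMap.proj (R := ℝ) (φ := fun _ : Fin 3 => ℝ) i).hasFDerivAt.comp_hasDerivAt t hA

lemma hd_dot {A B : ℝ → Fin 3 → ℝ} {A' B' : Fin 3 → ℝ} {t : ℝ}
    (hA : HasDerivAt A A' t) (hB : HasDerivAt B B' t) :
    HasDerivAt (fun s => A s ⬝ᵥ B s) (A' ⬝ᵥ B t + A t ⬝ᵥ B') t := by
  have h := (((hd_comp 0 hA).mul (hd_comp 0 hB)).add ((hd_comp 1 hA).mul (hd_comp 1 hB))).add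
    ((hd_comp 2 hA).mul (hd_comp 2 hB))
  refine (h.congr_deriv ?_).congr_of_eventuallyEq (Filter.Eventually.of_forall fun s => ?_)
  · simp [dotProduct, Fin.sum_univ_three]; ring
  · simp [dotProduct, Fin.sum_univ_three]

lemma hd_cross {A B : ℝ → Fin 3 → ℝ} {A' B' : Fin 3 → ℝ} {t : ℝ}
    (hA : HasDerivAt A A' t) (hB : HasDerivAt B B' t) :
    HasDerivAt (fun s => crossProduct (A s) (B s))
      (crossProduct A' (B t) + crossProduct (A t) B') t := by
  rw [hasDerivAt_pi]
  intro i
  fin_cases i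
  · convert (((hd_comp 1 hA).mul (hd_comp 2 hB)).sub ((hd_comp 2 hA).mul (hd_comp 1 hB))) using 1
    · rfl
    simp [cross_apply]; ring
  · convert (((hd_comp 2 hA).mul (hd_comp 0 hB)).sub ((hd_comp 0 hA).mul (hd_comp 2 hB))) using 1
    · rfl
    simp [cross_apply]; ring
  · convert (((hd_comp 0 hA).mul (hd_comp 1 hB)).sub ((hd_comp 1 hA).mul (hd_comp 0 hB))) using 1
    · rfl
    simp [cross_apply]; ring

lemma lagrange3 (a b v w : Fin 3 → ℝ) :
    crossProduct a b ⬝ᵥ crossProduct v w = (a ⬝ᵥ v) * (b ⬝ᵥ w) - (a ⬝ᵥ w) * (b ⬝ᵥ v) := by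
  simp [cross_apply, dotProduct, Fin.sum_univ_three]; ring

lemma cross_dot_left (a b : Fin 3 → ℝ) : crossProduct a b ⬝ᵥ a = 0 := by
  simp [cross_apply, dotProduct, Fin.sum_univ_three]; ring

lemma dot_self_pos {v : Fin 3 → ℝ} (hv : v ≠ 0) : 0 < v ⬝ᵥ v := by
  have hnn : 0 ≤ v ⬝ᵥ v := Finset.sum_nonneg fun i _ => mul_self_nonneg _
  rcases hnn.lt_or_eq with h | h
  · exact h
  · exact absurd ((dotProduct_self_eq_zero).mp h.symm) hv

lemma triple3 (c v w : Fin 3 → ℝ) :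
    crossProduct c (crossProduct v w) = (c ⬝ᵥ w) • v - (c ⬝ᵥ v) • w := by
  funext i; fin_cases i <;> · simp [cross_apply, dotProduct, Fin.sum_univ_three]; ring

lemma parallel3 {c w : Fin 3 → ℝ} (h : crossProduct c w = 0) :
    (c ⬝ᵥ c) • w = (w ⬝ᵥ c) • c := by
  have h0 := congrFun h 0
  have h1 := congrFun h 1
  have h2 := congrFun h 2
  simp [cross_apply] at h0 h1 h2
  funext i; fin_cases i <;>
    simp only [Pi.smul_apply, smul_eq_mul, dotProduct, Fin.sum_univ_three, Fin.zero_eta, Fin.mk_one, Fin.reduceFinMk]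
  · linear_combination (c 2) * h1 - (c 1) * h2
  · linear_combination (c 0) * h2 - (c 2) * h0
  · linear_combination (c 1) * h0 - (c 0) * h1

/-- For a regular parametrized surface `x(u₁,u₂)` in `ℝ³` with unit normal `N`,
the cross product of the partial derivatives of the Gauss map satisfies
`∂N/∂u₁ × ∂N/∂u₂ = K • (∂x/∂u₁ × ∂x/∂u₂)` where `K` is the Gaussian curvature. -/
theorem gauss_map_cross_product
    (x N xu1 xu2 : ℝ → ℝ → Fin 3 → ℝ)
    (I11 I12 I22 II11 II12 II22 K : ℝ → ℝ → ℝ)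
    (hx : ContDiff ℝ (⊤ : ℕ∞) fun p : ℝ × ℝ => x p.1 p.2)
    (hxu1 : ∀ u1 u2, xu1 u1 u2 = deriv (fun s => x s u2) u1)
    (hxu2 : ∀ u1 u2, xu2 u1 u2 = deriv (fun s => x u1 s) u2)
    (hreg : ∀ u1 u2, crossProduct (xu1 u1 u2) (xu2 u1 u2) ≠ 0)
    (hN : ∀ u1 u2, N u1 u2 =
      (norm3 (crossProduct (xu1 u1 u2) (xu2 u1 u2)))⁻¹ •
        crossProduct (xu1 u1 u2) (xu2 u1 u2))
    (hI11 : ∀ u1 u2, I11 u1 u2 = xu1 u1 u2 ⬝ᵥ xu1 u1 u2)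
    (hI12 : ∀ u1 u2, I12 u1 u2 = xu1 u1 u2 ⬝ᵥ xu2 u1 u2)
    (hI22 : ∀ u1 u2, I22 u1 u2 = xu2 u1 u2 ⬝ᵥ xu2 u1 u2)
    (hII11 : ∀ u1 u2, II11 u1 u2 = deriv (fun s => xu1 s u2) u1 ⬝ᵥ N u1 u2)
    (hII12 : ∀ u1 u2, II12 u1 u2 = deriv (fun s => xu1 u1 s) u2 ⬝ᵥ N u1 u2)
    (hII22 : ∀ u1 u2, II22 u1 u2 = deriv (fun s => xu2 u1 s) u2 ⬝ᵥ N u1 u2)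
    (hK : ∀ u1 u2, K u1 u2 =
      (II11 u1 u2 * II22 u1 u2 - II12 u1 u2 ^ 2) /
        (I11 u1 u2 * I22 u1 u2 - I12 u1 u2 ^ 2)) :
    ∀ u1 u2,
      crossProduct (deriv (fun s => N s u2) u1) (deriv (fun s => N u1 s) u2)
        = K u1 u2 • crossProduct (xu1 u1 u2) (xu2 u1 u2) := by
  intro a b
  set f : ℝ × ℝ → Fin 3 → ℝ := fun p : ℝ × ℝ => x p.1 p.2 with hf
  have hdf : Differentiable ℝ f := hx.differentiable (by simp)
  -- identification of xu1, xu2 with partial fderivs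
  have hf1 : ∀ p : ℝ × ℝ, HasDerivAt (fun s => x s p.2) (fderiv ℝ f p (1, 0)) p.1 := fun p =>
    by have h := (hdf p).hasFDerivAt.comp_hasDerivAt p.1 ((hasDerivAt_id p.1).prodMk (hasDerivAt_const p.1 p.2)); exact h
  have hf2 : ∀ p : ℝ × ℝ, HasDerivAt (fun t => x p.1 t) (fderiv ℝ f p (0, 1)) p.2 := fun p =>
    by have h := (hdf p).hasFDerivAt.comp_hasDerivAt p.2 ((hasDerivAt_const p.2 p.1).prodMk (hasDerivAt_id p.2)); exact h
  have e1 : ∀ u v : ℝ, xu1 u v = fderiv ℝ f (u, v) (1, 0) := fun u v => by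
    rw [hxu1]; exact (hf1 (u, v)).deriv
  have e2 : ∀ u v : ℝ, xu2 u v = fderiv ℝ f (u, v) (0, 1) := fun u v => by
    rw [hxu2]; exact (hf2 (u, v)).deriv
  -- second derivative
  have hgf : ContDiff ℝ (⊤ : ℕ∞) (fderiv ℝ f) := hx.fderiv_right (by simp)
  set F2 := fderiv ℝ (fderiv ℝ f) (a, b) with hF2def
  have hF2 : HasFDerivAt (fderiv ℝ f) F2 (a, b) :=
    ((hgf.differentiable (by simp)) (a, b)).hasFDerivAt
  have clairaut : F2 (1, 0) (0, 1) = F2 (0, 1) (1, 0) :=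
    second_derivative_symmetric (fun y => (hdf y).hasFDerivAt) hF2 (1, 0) (0, 1)
  have hg1 : HasFDerivAt (fun p => fderiv ℝ f p (1, 0))
      ((ContinuousLinearMap.apply ℝ (Fin 3 → ℝ) ((1:ℝ), (0:ℝ))).comp F2) (a, b) :=
    (ContinuousLinearMap.apply ℝ (Fin 3 → ℝ) ((1:ℝ), (0:ℝ))).hasFDerivAt.comp (a, b) hF2
  have hg2 : HasFDerivAt (fun p => fderiv ℝ f p (0, 1))
      ((ContinuousLinearMap.apply ℝ (Fin 3 → ℝ) ((0:ℝ), (1:ℝ))).comp F2) (a, b) :=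
    (ContinuousLinearMap.apply ℝ (Fin 3 → ℝ) ((0:ℝ), (1:ℝ))).hasFDerivAt.comp (a, b) hF2
  have hline1 : HasDerivAt (fun s : ℝ => (s, b)) ((1:ℝ), (0:ℝ)) a :=
    (hasDerivAt_id a).prodMk (hasDerivAt_const a b)
  have hline2 : HasDerivAt (fun t : ℝ => (a, t)) ((0:ℝ), (1:ℝ)) b :=
    (hasDerivAt_const b a).prodMk (hasDerivAt_id b)
  -- curve derivatives of xu1 and xu2
  have h11 : HasDerivAt (fun s => xu1 s b) (F2 (1, 0) (1, 0)) a := by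
    have h : HasDerivAt (fun s => fderiv ℝ f (s, b) (1, 0)) (F2 (1, 0) (1, 0)) a :=
      by have h' := hg1.comp_hasDerivAt a hline1; exact h'
    exact h.congr_of_eventuallyEq (Filter.Eventually.of_forall fun s => e1 s b)
  have h12 : HasDerivAt (fun t => xu1 a t) (F2 (0, 1) (1, 0)) b := by
    have h : HasDerivAt (fun t => fderiv ℝ f (a, t) (1, 0)) (F2 (0, 1) (1, 0)) b :=
      hg1.comp_hasDerivAt b hline2
    exact h.congr_of_eventuallyEq (Filter.Eventually.of_forall fun t => e1 a t)
  have h21 : HasDerivAt (fun s => xu2 s b) (F2 (1, 0) (0, 1)) a := by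
    have h : HasDerivAt (fun s => fderiv ℝ f (s, b) (0, 1)) (F2 (1, 0) (0, 1)) a :=
      by have h' := hg2.comp_hasDerivAt a hline1; exact h'
    exact h.congr_of_eventuallyEq (Filter.Eventually.of_forall fun s => e2 s b)
  have h22 : HasDerivAt (fun t => xu2 a t) (F2 (0, 1) (0, 1)) b := by
    have h : HasDerivAt (fun t => fderiv ℝ f (a, t) (0, 1)) (F2 (0, 1) (0, 1)) b :=
      hg2.comp_hasDerivAt b hline2
    exact h.congr_of_eventuallyEq (Filter.Eventually.of_forall fun t => e2 a t)
  -- notation for the normal-direction vector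
  set cv : ℝ → ℝ → Fin 3 → ℝ := fun u v => crossProduct (xu1 u v) (xu2 u v) with hcv
  have hcvpos : ∀ u v, 0 < cv u v ⬝ᵥ cv u v := fun u v => dot_self_pos (hreg u v)
  have hsqrtpos : ∀ u v, 0 < Real.sqrt (cv u v ⬝ᵥ cv u v) := fun u v =>
    Real.sqrt_pos.mpr (hcvpos u v)
  have hNval : ∀ u v, N u v = (Real.sqrt (cv u v ⬝ᵥ cv u v))⁻¹ • cv u v := fun u v => hN u v
  -- N is a unit vector and orthogonal to xu1, xu2
  have hNN : ∀ u v, N u v ⬝ᵥ N u v = 1 := by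
    intro u v
    rw [hNval, smul_dotProduct, dotProduct_smul, smul_eq_mul, smul_eq_mul, ← mul_assoc,
      ← mul_inv, Real.mul_self_sqrt (hcvpos u v).le]
    exact inv_mul_cancel₀ (hcvpos u v).ne'
  have hNx1 : ∀ u v, N u v ⬝ᵥ xu1 u v = 0 := by
    intro u v
    rw [hNval, smul_dotProduct, smul_eq_mul, cross_dot_left, mul_zero]
  have hNx2 : ∀ u v, N u v ⬝ᵥ xu2 u v = 0 := by
    intro u v
    rw [hNval, smul_dotProduct, smul_eq_mul, hcv]
    rw [show crossProduct (xu1 u v) (xu2 u v) ⬝ᵥ xu2 u v = 0 by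
      simp [cross_apply, dotProduct, Fin.sum_univ_three]; ring]
    rw [mul_zero]
  -- differentiability of N along the two coordinate lines
  have hc1 : HasDerivAt (fun s => cv s b)
      (crossProduct (F2 (1, 0) (1, 0)) (xu2 a b) + crossProduct (xu1 a b) (F2 (1, 0) (0, 1))) a :=
    hd_cross h11 h21
  have hc2 : HasDerivAt (fun t => cv a t)
      (crossProduct (F2 (0, 1) (1, 0)) (xu2 a b) + crossProduct (xu1 a b) (F2 (0, 1) (0, 1))) b :=
    hd_cross h12 h22
  have hNdiff1 : DifferentiableAt ℝ (fun s => N s b) a := by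
    have hq : HasDerivAt (fun s => cv s b ⬝ᵥ cv s b) _ a := hd_dot hc1 hc1
    have hsq : HasDerivAt (fun s => Real.sqrt (cv s b ⬝ᵥ cv s b)) _ a :=
      (Real.hasDerivAt_sqrt (ne_of_gt (hcvpos a b))).comp a hq
    have hinv := hsq.inv (ne_of_gt (hsqrtpos a b))
    have := hinv.smul hc1
    have heq : (fun s => N s b) = fun s => (Real.sqrt (cv s b ⬝ᵥ cv s b))⁻¹ • cv s b :=
      funext fun s => hNval s b
    rw [heq]
    exact this.differentiableAt
  have hNdiff2 : DifferentiableAt ℝ (fun t => N a t) b := by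
    have hq : HasDerivAt (fun t => cv a t ⬝ᵥ cv a t) _ b := hd_dot hc2 hc2
    have hsq : HasDerivAt (fun t => Real.sqrt (cv a t ⬝ᵥ cv a t)) _ b :=
      (Real.hasDerivAt_sqrt (ne_of_gt (hcvpos a b))).comp b hq
    have hinv := hsq.inv (ne_of_gt (hsqrtpos a b))
    have := hinv.smul hc2
    have heq : (fun t => N a t) = fun t => (Real.sqrt (cv a t ⬝ᵥ cv a t))⁻¹ • cv a t :=
      funext fun t => hNval a t
    rw [heq]
    exact this.differentiableAt
  set n1 := deriv (fun s => N s b) a with hn1def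
  set n2 := deriv (fun t => N a t) b with hn2def
  have hn1 : HasDerivAt (fun s => N s b) n1 a := hNdiff1.hasDerivAt
  have hn2 : HasDerivAt (fun t => N a t) n2 b := hNdiff2.hasDerivAt
  -- derivative of constant dot products
  have key : ∀ (A B : ℝ → Fin 3 → ℝ) (A' B' : Fin 3 → ℝ) (t : ℝ) (k : ℝ),
      HasDerivAt A A' t → HasDerivAt B B' t → (∀ s, A s ⬝ᵥ B s = k) →
      A' ⬝ᵥ B t + A t ⬝ᵥ B' = 0 := by
    intro A B A' B' t k hA hB hconst
    have h1 : HasDerivAt (fun s => A s ⬝ᵥ B s) (A' ⬝ᵥ B t + A t ⬝ᵥ B') t := hd_dot hA hB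
    have h2 : HasDerivAt (fun s => A s ⬝ᵥ B s) 0 t := by
      have : (fun s => A s ⬝ᵥ B s) = fun _ => k := funext hconst
      rw [this]; exact hasDerivAt_const t k
    exact h1.unique h2
  -- orthogonality of n1, n2 to N
  have hn1N : n1 ⬝ᵥ N a b = 0 := by
    have h := key _ _ _ _ _ _ hn1 hn1 (fun s => hNN s b)
    have h2 : N a b ⬝ᵥ n1 = n1 ⬝ᵥ N a b := dotProduct_comm _ _
    linarith [h, h2.symm ▸ h]
  have hn2N : n2 ⬝ᵥ N a b = 0 := by
    have h := key _ _ _ _ _ _ hn2 hn2 (fun t => hNN a t)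
    have h2 : N a b ⬝ᵥ n2 = n2 ⬝ᵥ N a b := dotProduct_comm _ _
    linarith [h, h2.symm ▸ h]
  -- dot products of n1, n2 with xu1, xu2
  have hII11' : II11 a b = F2 (1, 0) (1, 0) ⬝ᵥ N a b := by rw [hII11, h11.deriv]
  have hII12' : II12 a b = F2 (0, 1) (1, 0) ⬝ᵥ N a b := by rw [hII12, h12.deriv]
  have hII22' : II22 a b = F2 (0, 1) (0, 1) ⬝ᵥ N a b := by rw [hII22, h22.deriv]
  have hn1x1 : n1 ⬝ᵥ xu1 a b = -II11 a b := by
    have h := key _ _ _ _ _ _ hn1 h11 (fun s => hNx1 s b)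
    have hcomm := dotProduct_comm (N a b) (F2 (1, 0) (1, 0))
    rw [hII11']
    linarith [h, hcomm]
  have hn1x2 : n1 ⬝ᵥ xu2 a b = -II12 a b := by
    have h := key _ _ _ _ _ _ hn1 h21 (fun s => hNx2 s b)
    have hcomm := dotProduct_comm (N a b) (F2 (1, 0) (0, 1))
    rw [hII12', ← clairaut]
    linarith [h, hcomm]
  have hn2x1 : n2 ⬝ᵥ xu1 a b = -II12 a b := by
    have h := key _ _ _ _ _ _ hn2 h12 (fun t => hNx1 a t)
    have hcomm := dotProduct_comm (N a b) (F2 (0, 1) (1, 0))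
    rw [hII12']
    linarith [h, hcomm]
  have hn2x2 : n2 ⬝ᵥ xu2 a b = -II22 a b := by
    have h := key _ _ _ _ _ _ hn2 h22 (fun t => hNx2 a t)
    have hcomm := dotProduct_comm (N a b) (F2 (0, 1) (0, 1))
    rw [hII22']
    linarith [h, hcomm]
  -- n1, n2 are orthogonal to cv
  have hn1c : cv a b ⬝ᵥ n1 = 0 := by
    have h := hn1N
    rw [hNval, dotProduct_smul, smul_eq_mul] at h
    rcases mul_eq_zero.mp h with h' | h'
    · exact absurd h' (inv_ne_zero (ne_of_gt (hsqrtpos a b)))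
    · rw [dotProduct_comm]; exact h'
  have hn2c : cv a b ⬝ᵥ n2 = 0 := by
    have h := hn2N
    rw [hNval, dotProduct_smul, smul_eq_mul] at h
    rcases mul_eq_zero.mp h with h' | h'
    · exact absurd h' (inv_ne_zero (ne_of_gt (hsqrtpos a b)))
    · rw [dotProduct_comm]; exact h'
  -- cross n1 n2 is parallel to cv
  have hcrosszero : crossProduct (cv a b) (crossProduct n1 n2) = 0 := by
    rw [triple3, hn1c, hn2c, zero_smul, zero_smul, sub_zero]
  have hpar : (cv a b ⬝ᵥ cv a b) • crossProduct n1 n2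
      = (crossProduct n1 n2 ⬝ᵥ cv a b) • cv a b := parallel3 hcrosszero
  -- compute the two scalars
  have hwc : crossProduct n1 n2 ⬝ᵥ cv a b = II11 a b * II22 a b - II12 a b ^ 2 := by
    simp only [hcv]
    rw [lagrange3, hn1x1, hn1x2, hn2x1, hn2x2]
    ring
  have hcc : cv a b ⬝ᵥ cv a b = I11 a b * I22 a b - I12 a b ^ 2 := by
    simp only [hcv]
    rw [lagrange3, hI11, hI12, hI22, dotProduct_comm (xu2 a b) (xu1 a b)]
    ring
  -- conclude
  have hD : I11 a b * I22 a b - I12 a b ^ 2 ≠ 0 := by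
    rw [← hcc]; exact ne_of_gt (hcvpos a b)
  have : crossProduct n1 n2 =
      ((II11 a b * II22 a b - II12 a b ^ 2) / (I11 a b * I22 a b - I12 a b ^ 2)) • cv a b := by
    have h := hpar
    rw [hwc, hcc] at h
    have h2 := congrArg (fun w => (I11 a b * I22 a b - I12 a b ^ 2)⁻¹ • w) h
    simp only [smul_smul, inv_mul_cancel₀ hD, one_smul] at h2
    rw [h2, div_eq_inv_mul]
  rw [this, hK]
end

section
/- For an asymptotic Chebyshev net, the Gauss map N satisfies the Moutard equation ∂²N/∂s1∂s2 = N·cos θ, where θ is the Chebyshev angle. In particular, ∂(‖∂N/∂s1‖²)/∂s2 = 0 and ∂(‖∂N/∂s2‖²)/∂s1 = 0, so the Gauss map of a K-surface is itself a Chebyshev net. -/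
open Matrix

section Helpers

lemma hasDerivAt_fst' {E : Type*} [NormedAddCommGroup E] [NormedSpace ℝ E]
    {F : ℝ × ℝ → E} (hF : Differentiable ℝ F) (a b : ℝ) :
    HasDerivAt (fun t => F (t, b)) (fderiv ℝ F (a, b) (1, 0)) a :=
  (hF (a, b)).hasFDerivAt.comp_hasDerivAt a
    (((hasDerivAt_id a).prodMk (hasDerivAt_const a b)))

lemma hasDerivAt_snd' {E : Type*} [NormedAddCommGroup E] [NormedSpace ℝ E]
    {F : ℝ × ℝ → E} (hF : Differentiable ℝ F) (a b : ℝ) :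
    HasDerivAt (fun t => F (a, t)) (fderiv ℝ F (a, b) (0, 1)) b :=
  (hF (a, b)).hasFDerivAt.comp_hasDerivAt b
    (((hasDerivAt_const b a).prodMk (hasDerivAt_id b)))

lemma schwarz {E : Type*} [NormedAddCommGroup E] [NormedSpace ℝ E]
    {F : ℝ × ℝ → E} (hF : ContDiff ℝ (⊤ : ℕ∞) F) (u v : ℝ) :
    deriv (fun a => deriv (fun b => F (a, b)) v) u
      = deriv (fun b => deriv (fun a => F (a, b)) u) v := by
  have hd : Differentiable ℝ F := hF.differentiable (by simp)
  have hG : ContDiff ℝ 1 (fderiv ℝ F) := hF.fderiv_right (by exact WithTop.coe_le_coe.mpr le_top)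
  have hGd : Differentiable ℝ (fderiv ℝ F) := hG.differentiable one_ne_zero
  have h1 : ∀ a, deriv (fun b => F (a, b)) v = fderiv ℝ F (a, v) (0, 1) := fun a =>
    (hasDerivAt_snd' hd a v).deriv
  have h2 : ∀ b, deriv (fun a => F (a, b)) u = fderiv ℝ F (u, b) (1, 0) := fun b =>
    (hasDerivAt_fst' hd u b).deriv
  have e1 : HasDerivAt (fun a => fderiv ℝ F (a, v) (0, 1))
      (fderiv ℝ (fderiv ℝ F) (u, v) (1, 0) (0, 1)) u := by
    have := (hasDerivAt_fst' hGd u v).clm_apply (hasDerivAt_const u ((0 : ℝ), (1 : ℝ)))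
    simpa using this
  have e2 : HasDerivAt (fun b => fderiv ℝ F (u, b) (1, 0))
      (fderiv ℝ (fderiv ℝ F) (u, v) (0, 1) (1, 0)) v := by
    have := (hasDerivAt_snd' hGd u v).clm_apply (hasDerivAt_const v ((1 : ℝ), (0 : ℝ)))
    simpa using this
  have hsymm : fderiv ℝ (fderiv ℝ F) (u, v) (1, 0) (0, 1)
      = fderiv ℝ (fderiv ℝ F) (u, v) (0, 1) (1, 0) :=
    (hF.contDiffAt.isSymmSndFDerivAt (by rw [minSmoothness_of_isRCLikeNormedField]; exact WithTop.coe_le_coe.mpr (le_top : (2 : ℕ∞) ≤ ⊤))) _ _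
  calc deriv (fun a => deriv (fun b => F (a, b)) v) u
      = deriv (fun a => fderiv ℝ F (a, v) (0, 1)) u := by simp only [h1]
    _ = fderiv ℝ (fderiv ℝ F) (u, v) (1, 0) (0, 1) := e1.deriv
    _ = fderiv ℝ (fderiv ℝ F) (u, v) (0, 1) (1, 0) := hsymm
    _ = deriv (fun b => fderiv ℝ F (u, b) (1, 0)) v := e2.deriv.symm
    _ = deriv (fun b => deriv (fun a => F (a, b)) u) v := by simp only [h2]

lemma schwarz' {E : Type*} [NormedAddCommGroup E] [NormedSpace ℝ E]
    (f : ℝ → ℝ → E) (hf : ContDiff ℝ (⊤ : ℕ∞) fun p : ℝ × ℝ => f p.1 p.2) (u v : ℝ) :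
    deriv (fun a => deriv (fun b => f a b) v) u
      = deriv (fun b => deriv (fun a => f a b) u) v :=
  schwarz hf u v

lemma HasDerivAt.dotProd {f g : ℝ → Fin 3 → ℝ} {f' g' : Fin 3 → ℝ} {t : ℝ}
    (hf : HasDerivAt f f' t) (hg : HasDerivAt g g' t) :
    HasDerivAt (fun t => f t ⬝ᵥ g t) (f' ⬝ᵥ g t + f t ⬝ᵥ g') t := by
  have hfi := hasDerivAt_pi.mp hf
  have hgi := hasDerivAt_pi.mp hg
  simp only [dotProduct, Fin.sum_univ_three]
  have := (((hfi 0).mul (hgi 0)).add ((hfi 1).mul (hgi 1))).add ((hfi 2).mul (hgi 2))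
  exact this.congr_deriv (by ring)

lemma one_div_tan' (t : ℝ) (hs : Real.sin t ≠ 0) :
    1 / Real.tan t = Real.cos t / Real.sin t := by
  rw [Real.tan_eq_sin_div_cos]
  rcases eq_or_ne (Real.cos t) 0 with h | h
  · simp [h]
  · field_simp

lemma resolve (v1 v2 n u w : Fin 3 → ℝ) (c s : ℝ) (hs : s ≠ 0)
    (hcs : s ^ 2 + c ^ 2 = 1)
    (h11 : v1 ⬝ᵥ v1 = 1) (h22 : v2 ⬝ᵥ v2 = 1) (h12 : v1 ⬝ᵥ v2 = c)
    (hnn : n ⬝ᵥ n = 1) (hn1 : n ⬝ᵥ v1 = 0) (hn2 : n ⬝ᵥ v2 = 0)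
    (e1 : v1 ⬝ᵥ u = v1 ⬝ᵥ w) (e2 : v2 ⬝ᵥ u = v2 ⬝ᵥ w) (e3 : n ⬝ᵥ u = n ⬝ᵥ w) :
    u = w := by
  simp only [dotProduct, Fin.sum_univ_three] at h11 h22 h12 hnn hn1 hn2 e1 e2 e3
  set B : Matrix (Fin 3) (Fin 3) ℝ := Matrix.of ![v1, v2, n] with hB
  have hBBT : B * Bᵀ = !![1, c, 0; c, 1, 0; 0, 0, 1] := by
    ext i j
    fin_cases i <;> fin_cases j <;>
      simp [hB, Matrix.mul_apply, Fin.sum_univ_three, Matrix.transpose_apply,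
        Matrix.vecHead, Matrix.vecTail, Function.comp] <;>
      linarith
  have hdet2 : B.det * B.det = s ^ 2 := by
    have h := congrArg Matrix.det hBBT
    rw [Matrix.det_mul, Matrix.det_transpose] at h
    rw [h, Matrix.det_fin_three]
    simp
    nlinarith [hcs]
  have hunit : IsUnit B := by
    rw [Matrix.isUnit_iff_isUnit_det, isUnit_iff_ne_zero]
    intro h
    rw [h, mul_zero] at hdet2
    exact (pow_ne_zero 2 hs) hdet2.symm
  have hinj : Function.Injective B.mulVec := Matrix.mulVec_injective_iff_isUnit.mpr hunit
  apply hinj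
  funext i
  fin_cases i
  · simpa [hB, Matrix.mulVec, dotProduct, Fin.sum_univ_three] using e1
  · simpa [hB, Matrix.mulVec, dotProduct, Fin.sum_univ_three] using e2
  · simpa [hB, Matrix.mulVec, dotProduct, Fin.sum_univ_three] using e3

end Helpers

/-- For an asymptotic Chebyshev net (K-surface), the Gauss map `N` satisfies the
Moutard equation `∂²N/∂s₁∂s₂ = cos θ • N`, and `∂(‖∂N/∂s₁‖²)/∂s₂ = 0`,
`∂(‖∂N/∂s₂‖²)/∂s₁ = 0`, so the Gauss map is itself a Chebyshev net. -/
theorem gauss_map_of_K_surface_is_chebyshev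
    (x xs1 xs2 N : ℝ → ℝ → Fin 3 → ℝ) (θ : ℝ → ℝ → ℝ)
    (hx : ContDiff ℝ (⊤ : ℕ∞) fun p : ℝ × ℝ => x p.1 p.2)
    (hNs : ContDiff ℝ (⊤ : ℕ∞) fun p : ℝ × ℝ => N p.1 p.2)
    (hθs : ContDiff ℝ (⊤ : ℕ∞) fun p : ℝ × ℝ => θ p.1 p.2)
    (hxs1 : ∀ u1 u2, xs1 u1 u2 = deriv (fun s => x s u2) u1)
    (hxs2 : ∀ u1 u2, xs2 u1 u2 = deriv (fun s => x u1 s) u2)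
    (hθrange : ∀ u1 u2, θ u1 u2 ∈ Set.Ioo 0 Real.pi)
    -- first fundamental form of a Chebyshev net
    (hI11 : ∀ u1 u2, xs1 u1 u2 ⬝ᵥ xs1 u1 u2 = 1)
    (hI22 : ∀ u1 u2, xs2 u1 u2 ⬝ᵥ xs2 u1 u2 = 1)
    (hI12 : ∀ u1 u2, xs1 u1 u2 ⬝ᵥ xs2 u1 u2 = Real.cos (θ u1 u2))
    -- `N` is the unit normal field
    (hNunit : ∀ u1 u2, N u1 u2 ⬝ᵥ N u1 u2 = 1)
    (hNorth1 : ∀ u1 u2, N u1 u2 ⬝ᵥ xs1 u1 u2 = 0)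
    (hNorth2 : ∀ u1 u2, N u1 u2 ⬝ᵥ xs2 u1 u2 = 0)
    -- second fundamental form `[[0, sin θ],[sin θ, 0]]` (asymptotic condition)
    (hII11 : ∀ u1 u2, deriv (fun s => xs1 s u2) u1 ⬝ᵥ N u1 u2 = 0)
    (hII12 : ∀ u1 u2, deriv (fun s => xs1 u1 s) u2 ⬝ᵥ N u1 u2 = Real.sin (θ u1 u2))
    (hII22 : ∀ u1 u2, deriv (fun s => xs2 u1 s) u2 ⬝ᵥ N u1 u2 = 0)
    -- derivatives of the Gauss map
    (hGauss1 : ∀ u1 u2, deriv (fun s => N s u2) u1 =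
      (1 / Real.tan (θ u1 u2)) • xs1 u1 u2 - (1 / Real.sin (θ u1 u2)) • xs2 u1 u2)
    (hGauss2 : ∀ u1 u2, deriv (fun s => N u1 s) u2 =
      -(1 / Real.sin (θ u1 u2)) • xs1 u1 u2 + (1 / Real.tan (θ u1 u2)) • xs2 u1 u2) :
    ∀ u1 u2,
      deriv (fun a => deriv (fun b => N a b) u2) u1
        = Real.cos (θ u1 u2) • N u1 u2 ∧
      deriv (fun b => deriv (fun a => N a b) u1 ⬝ᵥ deriv (fun a => N a b) u1) u2 = 0 ∧
      deriv (fun a => deriv (fun b => N a b) u2 ⬝ᵥ deriv (fun b => N a b) u2) u1 = 0 := by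
  -- basic differentiability
  have hxd : Differentiable ℝ (fun p : ℝ × ℝ => x p.1 p.2) := hx.differentiable (by simp)
  have hθd : Differentiable ℝ (fun p : ℝ × ℝ => θ p.1 p.2) := hθs.differentiable (by simp)
  -- sin θ positive
  have hsin : ∀ a b, 0 < Real.sin (θ a b) := fun a b =>
    Real.sin_pos_of_pos_of_lt_pi (hθrange a b).1 (hθrange a b).2
  have hsne : ∀ a b, Real.sin (θ a b) ≠ 0 := fun a b => (hsin a b).ne'
  -- xs1, xs2 are jointly smooth
  have hxs1f : (fun p : ℝ × ℝ => xs1 p.1 p.2)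
      = fun p => fderiv ℝ (fun p : ℝ × ℝ => x p.1 p.2) p (1, 0) := by
    funext p
    rw [hxs1 p.1 p.2]
    exact (hasDerivAt_fst' hxd p.1 p.2).deriv
  have hxs2f : (fun p : ℝ × ℝ => xs2 p.1 p.2)
      = fun p => fderiv ℝ (fun p : ℝ × ℝ => x p.1 p.2) p (0, 1) := by
    funext p
    rw [hxs2 p.1 p.2]
    exact (hasDerivAt_snd' hxd p.1 p.2).deriv
  have hxs1C : ContDiff ℝ (⊤ : ℕ∞) (fun p : ℝ × ℝ => xs1 p.1 p.2) := by
    rw [hxs1f]; exact (hx.fderiv_right (by simp)).clm_apply contDiff_const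
  have hxs2C : ContDiff ℝ (⊤ : ℕ∞) (fun p : ℝ × ℝ => xs2 p.1 p.2) := by
    rw [hxs2f]; exact (hx.fderiv_right (by simp)).clm_apply contDiff_const
  have hxs1d : Differentiable ℝ (fun p : ℝ × ℝ => xs1 p.1 p.2) := hxs1C.differentiable (by simp)
  have hxs2d : Differentiable ℝ (fun p : ℝ × ℝ => xs2 p.1 p.2) := hxs2C.differentiable (by simp)
  -- sections have derivatives
  have hX12 : ∀ a b, HasDerivAt (fun t => xs1 a t) (deriv (fun t => xs1 a t) b) b :=
    fun a b => (hasDerivAt_snd' hxs1d a b).differentiableAt.hasDerivAt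
  have hX22 : ∀ a b, HasDerivAt (fun t => xs2 a t) (deriv (fun t => xs2 a t) b) b :=
    fun a b => (hasDerivAt_snd' hxs2d a b).differentiableAt.hasDerivAt
  have hθ2 : ∀ a b, HasDerivAt (fun t => θ a t) (deriv (fun t => θ a t) b) b :=
    fun a b => (hasDerivAt_snd' hθd a b).differentiableAt.hasDerivAt
  -- Schwarz for x : the two mixed partials agree
  have hw_eq : ∀ a b, deriv (fun t => xs2 t b) a = deriv (fun t => xs1 a t) b := by
    intro a b
    calc deriv (fun t => xs2 t b) a
        = deriv (fun t => deriv (fun s => x t s) b) a := by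
          congr 1; funext t; exact hxs2 t b
      _ = deriv (fun s => deriv (fun t => x t s) a) b := schwarz' x hx a b
      _ = deriv (fun t => xs1 a t) b := by
          congr 1; funext s; exact (hxs1 a s).symm
  -- derivative of xs1 ⬝ xs1 = 1 in second variable :  x12 ⬝ v1 = 0
  have dx12v1 : ∀ a b, deriv (fun t => xs1 a t) b ⬝ᵥ xs1 a b = 0 := by
    intro a b
    have H := (hX12 a b).dotProd (hX12 a b)
    have hfun : (fun t => xs1 a t ⬝ᵥ xs1 a t) = fun _ => (1 : ℝ) :=
      funext fun t => hI11 a t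
    rw [hfun] at H
    have := H.unique (hasDerivAt_const b 1)
    have hc := dotProduct_comm (xs1 a b) (deriv (fun t => xs1 a t) b)
    linarith [this, hc]
  -- derivative of xs2 ⬝ xs2 = 1 in first variable, combined with Schwarz : x12 ⬝ v2 = 0
  have dx12v2 : ∀ a b, deriv (fun t => xs1 a t) b ⬝ᵥ xs2 a b = 0 := by
    intro a b
    have hW : HasDerivAt (fun t => xs2 t b) (deriv (fun t => xs2 t b) a) a :=
      (hasDerivAt_fst' hxs2d a b).differentiableAt.hasDerivAt
    have H := hW.dotProd hW
    have hfun : (fun t => xs2 t b ⬝ᵥ xs2 t b) = fun _ => (1 : ℝ) :=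
      funext fun t => hI22 t b
    rw [hfun] at H
    have h0 := H.unique (hasDerivAt_const a 1)
    have hc := dotProduct_comm (xs2 a b) (deriv (fun t => xs2 t b) a)
    have : deriv (fun t => xs2 t b) a ⬝ᵥ xs2 a b = 0 := by linarith [h0, hc]
    rwa [hw_eq a b] at this
  -- derivative of xs2 ⬝ xs2 = 1 in second variable : x22 ⬝ v2 = 0
  have dx22v2 : ∀ a b, deriv (fun t => xs2 a t) b ⬝ᵥ xs2 a b = 0 := by
    intro a b
    have H := (hX22 a b).dotProd (hX22 a b)
    have hfun : (fun t => xs2 a t ⬝ᵥ xs2 a t) = fun _ => (1 : ℝ) :=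
      funext fun t => hI22 a t
    rw [hfun] at H
    have := H.unique (hasDerivAt_const b 1)
    have hc := dotProduct_comm (xs2 a b) (deriv (fun t => xs2 a t) b)
    linarith [this, hc]
  -- derivative of xs1 ⬝ xs2 = cos θ in second variable : v1 ⬝ x22 = -sin θ * θ₂
  have dv1x22 : ∀ a b, xs1 a b ⬝ᵥ deriv (fun t => xs2 a t) b
      = -Real.sin (θ a b) * deriv (fun t => θ a t) b := by
    intro a b
    have H := (hX12 a b).dotProd (hX22 a b)
    have hfun : (fun t => xs1 a t ⬝ᵥ xs2 a t) = fun t => Real.cos (θ a t) :=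
      funext fun t => hI12 a t
    rw [hfun] at H
    have H2 := (hθ2 a b).cos
    have heq := H.unique H2
    have h12 := dx12v2 a b
    linarith [heq, h12]
  intro u1 u2
  set c := Real.cos (θ u1 u2) with hc
  set s := Real.sin (θ u1 u2) with hs
  have hsne' : s ≠ 0 := hsne u1 u2
  have hcs : s ^ 2 + c ^ 2 = 1 := Real.sin_sq_add_cos_sq (θ u1 u2)
  set v1 := xs1 u1 u2 with hv1
  set v2 := xs2 u1 u2 with hv2
  set n := N u1 u2 with hn
  set θ₂ := deriv (fun t => θ u1 t) u2 with hθ₂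
  set x12 := deriv (fun t => xs1 u1 t) u2 with hx12
  set x22 := deriv (fun t => xs2 u1 t) u2 with hx22def
  -- resolve x12 = s • n
  have rx12 : x12 = s • n := by
    apply resolve v1 v2 n x12 (s • n) c s hsne' hcs (hI11 u1 u2) (hI22 u1 u2)
      (hI12 u1 u2) (hNunit u1 u2)
      (hNorth1 u1 u2) (hNorth2 u1 u2)
    · rw [dotProduct_comm v1 x12, dotProduct_smul]
      rw [dotProduct_comm v1 n]
      rw [dx12v1 u1 u2]
      rw [hNorth1 u1 u2]
      simp
    · rw [dotProduct_comm v2 x12, dotProduct_smul]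
      rw [dotProduct_comm v2 n]
      rw [dx12v2 u1 u2]
      rw [hNorth2 u1 u2]
      simp
    · rw [dotProduct_comm n x12, dotProduct_smul]
      rw [hII12 u1 u2, hNunit u1 u2]
      simp [hs]
  -- resolve x22 = -(θ₂/s) • v1 + (c*θ₂/s) • v2
  have rx22 : x22 = (-(θ₂ / s)) • v1 + (c * θ₂ / s) • v2 := by
    apply resolve v1 v2 n x22 _ c s hsne' hcs (hI11 u1 u2) (hI22 u1 u2)
      (hI12 u1 u2) (hNunit u1 u2) (hNorth1 u1 u2) (hNorth2 u1 u2)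
    · rw [dotProduct_add, dotProduct_smul, dotProduct_smul, hI11 u1 u2, hI12 u1 u2]
      have := dv1x22 u1 u2
      rw [← hv1, ← hx22def, ← hs, ← hθ₂] at this
      rw [this]
      rw [← hc]
      field_simp
      linear_combination (-θ₂ * s⁻¹) * hcs + θ₂ * s * inv_mul_cancel₀ hsne'
    · rw [dotProduct_add, dotProduct_smul, dotProduct_smul,
        dotProduct_comm v2 v1, hI12 u1 u2, hI22 u1 u2]
      rw [dotProduct_comm v2 x22]
      rw [dx22v2 u1 u2]
      rw [← hc]
      field_simp
      ring
    · rw [dotProduct_add, dotProduct_smul, dotProduct_smul,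
        hNorth1 u1 u2, hNorth2 u1 u2]
      rw [dotProduct_comm n x22]
      rw [hII22 u1 u2]
      simp
  -- derivatives of coefficient functions
  have Hsin : HasDerivAt (fun t => Real.sin (θ u1 t)) (Real.cos (θ u1 u2) * θ₂) u2 :=
    (hθ2 u1 u2).sin
  have Hcos : HasDerivAt (fun t => Real.cos (θ u1 t)) (-Real.sin (θ u1 u2) * θ₂) u2 :=
    (hθ2 u1 u2).cos
  have Hg2 : HasDerivAt (fun t => Real.cos (θ u1 t) / Real.sin (θ u1 t)) (-θ₂ / s ^ 2) u2 := by
    have H := Hcos.div Hsin (hsne u1 u2)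
    refine H.congr_deriv ?_
    symm
    rw [← hc, ← hs]
    field_simp
    linear_combination θ₂ * hcs
  have Hg1 : HasDerivAt (fun t => 1 / Real.sin (θ u1 t)) (-(c * θ₂) / s ^ 2) u2 := by
    have H := (hasDerivAt_const u2 (1 : ℝ)).div Hsin (hsne u1 u2)
    refine H.congr_deriv ?_
    symm
    rw [← hc, ← hs]
    field_simp
    ring
  -- main computation
  refine ⟨?_, ?_, ?_⟩
  · -- Moutard equation
    rw [schwarz' N hNs u1 u2]
    have hfun : (fun b => deriv (fun a => N a b) u1)
        = fun b => (Real.cos (θ u1 b) / Real.sin (θ u1 b)) • xs1 u1 b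
            - (1 / Real.sin (θ u1 b)) • xs2 u1 b := by
      funext b
      rw [hGauss1 u1 b, one_div_tan' (θ u1 b) (hsne u1 b)]
    rw [hfun]
    have H : HasDerivAt (fun b => (Real.cos (θ u1 b) / Real.sin (θ u1 b)) • xs1 u1 b
        - (1 / Real.sin (θ u1 b)) • xs2 u1 b) _ u2 := (Hg2.smul (hX12 u1 u2)).sub (Hg1.smul (hX22 u1 u2))
    rw [H.deriv]
    rw [← hx12, ← hx22def, rx12, rx22, ← hv1, ← hv2]
    funext i
    simp only [Pi.add_apply, Pi.sub_apply, Pi.smul_apply, Pi.neg_apply, smul_eq_mul]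
    rw [← hs, ← hc]
    field_simp
    ring
  · -- ‖N_{s1}‖² is constant in s2
    have hfun : (fun b => deriv (fun a => N a b) u1 ⬝ᵥ deriv (fun a => N a b) u1)
        = fun _ => (1 : ℝ) := by
      funext b
      rw [hGauss1 u1 b, one_div_tan' (θ u1 b) (hsne u1 b)]
      simp only [sub_dotProduct, dotProduct_sub, smul_dotProduct, dotProduct_smul,
        smul_eq_mul, hI11 u1 b, hI22 u1 b, hI12 u1 b,
        dotProduct_comm (xs2 u1 b) (xs1 u1 b)]
      have h1 := Real.sin_sq_add_cos_sq (θ u1 b)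
      have h2 := hsne u1 b
      field_simp
      linear_combination -h1
    rw [hfun, deriv_const]
  · -- ‖N_{s2}‖² is constant in s1
    have hfun : (fun a => deriv (fun b => N a b) u2 ⬝ᵥ deriv (fun b => N a b) u2)
        = fun _ => (1 : ℝ) := by
      funext a
      rw [hGauss2 a u2, one_div_tan' (θ a u2) (hsne a u2)]
      simp only [add_dotProduct, dotProduct_add, neg_smul, neg_dotProduct,
        dotProduct_neg, smul_dotProduct, dotProduct_smul, smul_eq_mul,
        hI11 a u2, hI22 a u2, hI12 a u2, dotProduct_comm (xs2 a u2) (xs1 a u2)]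
      have h1 := Real.sin_sq_add_cos_sq (θ a u2)
      have h2 := hsne a u2
      field_simp
      linear_combination -h1
    rw [hfun, deriv_const]
end

section
/- For the Schwarz lantern inscribed in a cylinder of radius r and height h with m horizontal layers and n subdivisions per circle, the area of each elementary triangle equals r·sin(π/n)·√(h²/m² + 4r²·sin⁴(π/(2n))), and the total area equals 2n·sin(π/n)·m·r·√(h²/m² + 4r²·sin⁴(π/(2n))) ... in particular, if m = c·n² with c > 0 fixed, the total area converges to 2πrh·√(1 + c²r²π⁴/(4h²)) as n → ∞, which exceeds the cylinder area 2πrh whenever c > 0. -/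
open Matrix

/-- A point on the cylinder of radius `r`: height `z`, angle `ang`. -/
noncomputable def lanternPt (r z ang : ℝ) : Fin 3 → ℝ :=
  ![r * Real.cos ang, r * Real.sin ang, z]

lemma lantern_tri (r z d θ a : ℝ) (hr : 0 ≤ r) (hs : 0 ≤ Real.sin a) :
    (1 / 2) * norm3 (crossProduct
        (lanternPt r z (θ + 2 * a) - lanternPt r z θ)
        (lanternPt r (z + d) (θ + a) - lanternPt r z θ)) =
    r * Real.sin a * Real.sqrt (d ^ 2 + 4 * r ^ 2 * Real.sin (a / 2) ^ 4) := by
  set u := Real.sin θ with hu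
  set v := Real.cos θ with hv
  set s := Real.sin (a / 2) with hsdef
  set c := Real.cos (a / 2) with hcdef
  have pθ : u ^ 2 + v ^ 2 = 1 := Real.sin_sq_add_cos_sq θ
  have pa : s ^ 2 + c ^ 2 = 1 := Real.sin_sq_add_cos_sq (a / 2)
  have hca : Real.cos a = 2 * c ^ 2 - 1 := by
    rw [show a = 2 * (a / 2) by ring, Real.cos_two_mul]
  have hsa : Real.sin a = 2 * s * c := by
    rw [show a = 2 * (a / 2) by ring, Real.sin_two_mul, mul_assoc]
  have hc2 : Real.cos (2 * a) = 2 * (2 * c ^ 2 - 1) ^ 2 - 1 := by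
    rw [Real.cos_two_mul, hca]
  have hs2 : Real.sin (2 * a) = 2 * (2 * s * c) * (2 * c ^ 2 - 1) := by
    rw [Real.sin_two_mul, hsa, hca]
  have hA : lanternPt r z (θ + 2 * a) - lanternPt r z θ =
      ![r * (v * (2 * (2 * c ^ 2 - 1) ^ 2 - 1) - u * (2 * (2 * s * c) * (2 * c ^ 2 - 1))) - r * v,
        r * (u * (2 * (2 * c ^ 2 - 1) ^ 2 - 1) + v * (2 * (2 * s * c) * (2 * c ^ 2 - 1))) - r * u,
        0] := by
    funext i
    fin_cases i <;>
      simp [lanternPt, Real.cos_add, Real.sin_add, hc2, hs2, hu, hv]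
  have hB : lanternPt r (z + d) (θ + a) - lanternPt r z θ =
      ![r * (v * (2 * c ^ 2 - 1) - u * (2 * s * c)) - r * v,
        r * (u * (2 * c ^ 2 - 1) + v * (2 * s * c)) - r * u,
        d] := by
    funext i
    fin_cases i <;>
      simp [lanternPt, Real.cos_add, Real.sin_add, hca, hsa, hu, hv]
  rw [hA, hB, norm3, cross_apply]
  have hdot : ∀ x y w : ℝ, (![x, y, w] : Fin 3 → ℝ) ⬝ᵥ ![x, y, w] = x ^ 2 + y ^ 2 + w ^ 2 := by
    intro x y w
    simp [dotProduct, Fin.sum_univ_three]; ring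
  rw [hdot]
  have key : ((r * (u * (2 * (2 * c ^ 2 - 1) ^ 2 - 1) + v * (2 * (2 * s * c) * (2 * c ^ 2 - 1))) - r * u) * d -
        0 * (r * (u * (2 * c ^ 2 - 1) + v * (2 * s * c)) - r * u)) ^ 2 +
      (0 * (r * (v * (2 * c ^ 2 - 1) - u * (2 * s * c)) - r * v) -
        (r * (v * (2 * (2 * c ^ 2 - 1) ^ 2 - 1) - u * (2 * (2 * s * c) * (2 * c ^ 2 - 1))) - r * v) * d) ^ 2 +
      ((r * (v * (2 * (2 * c ^ 2 - 1) ^ 2 - 1) - u * (2 * (2 * s * c) * (2 * c ^ 2 - 1))) - r * v) *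
          (r * (u * (2 * c ^ 2 - 1) + v * (2 * s * c)) - r * u) -
        (r * (u * (2 * (2 * c ^ 2 - 1) ^ 2 - 1) + v * (2 * (2 * s * c) * (2 * c ^ 2 - 1))) - r * u) *
          (r * (v * (2 * c ^ 2 - 1) - u * (2 * s * c)) - r * v)) ^ 2
      = (2 * r * (2 * s * c)) ^ 2 * (d ^ 2 + 4 * r ^ 2 * s ^ 4) := by
    linear_combination
      (64*c^4*r^2*d^2 - 128*c^6*r^2*d^2 + 64*c^8*r^2*d^2 + 16*s^2*c^2*r^2*d^2 + 64*s^2*c^2*r^4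
        - 64*s^2*c^4*r^2*d^2 - 128*s^2*c^4*r^4 + 64*s^2*c^6*r^2*d^2 + 64*s^2*c^6*r^4
        + 64*v^2*s^2*c^2*r^4 - 128*v^2*s^2*c^4*r^4 + 64*v^2*s^2*c^6*r^4
        + 64*u^2*s^2*c^2*r^4 - 128*u^2*s^2*c^4*r^4 + 64*u^2*s^2*c^6*r^4) * pθ +
      (-64*c^4*r^2*d^2 + 64*c^6*r^2*d^2 - 64*s^2*c^2*r^4 + 64*s^2*c^4*r^4 - 64*s^4*c^2*r^4) * pa
  simp only [Matrix.cons_val_zero, Matrix.cons_val_one, Matrix.head_cons, Matrix.cons_val_two,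
    Matrix.tail_cons]
  rw [hsa, key, Real.sqrt_mul (sq_nonneg _),
    Real.sqrt_sq (by nlinarith [hs, hsa] : (0:ℝ) ≤ 2 * r * (2 * s * c))]
  ring

open Filter Topology

lemma lim_nsin (a : ℝ) (ha : 0 < a) :
    Tendsto (fun n : ℕ => (n : ℝ) * Real.sin (a / n)) atTop (nhds a) := by
  have hslope : Tendsto (fun x : ℝ => Real.sin x / x) (nhdsWithin 0 {(0:ℝ)}ᶜ) (nhds 1) := by
    have h := (Real.hasDerivAt_sin 0)
    rw [hasDerivAt_iff_tendsto_slope] at h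
    simpa [slope_fun_def, Real.sin_zero, Real.cos_zero, div_eq_inv_mul] using h
  have h2 : Tendsto (fun n : ℕ => a / n) atTop (nhdsWithin 0 {(0:ℝ)}ᶜ) := by
    apply tendsto_nhdsWithin_of_tendsto_nhds_of_eventually_within
    · exact tendsto_const_div_atTop_nhds_zero_nat a
    · filter_upwards [eventually_ge_atTop 1] with n hn
      have : (0:ℝ) < n := by exact_mod_cast Nat.lt_of_lt_of_le Nat.zero_lt_one hn
      simp only [Set.mem_compl_iff, Set.mem_singleton_iff]
      positivity
  have h3 : Tendsto (fun n : ℕ => a * (Real.sin (a / n) / (a / n))) atTop (nhds a) := by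
    have := (hslope.comp h2).const_mul a
    simpa using this
  apply h3.congr'
  filter_upwards [eventually_ge_atTop 1] with n hn
  have hn0 : (0:ℝ) < n := by exact_mod_cast Nat.lt_of_lt_of_le Nat.zero_lt_one hn
  field_simp

/-- The Schwarz lantern inscribed in a cylinder of radius `r` and height `h` with `m`
layers and `n` subdivisions per circle: each elementary triangle has area
`r·sin(π/n)·√(h²/m² + 4r²·sin⁴(π/(2n)))`; the total area (of the `2mn` triangles) with
`m = c·n²` converges to `2πrh·√(1 + c²r²π⁴/(4h²))` as `n → ∞`, which exceeds the
cylinder area `2πrh` since `c > 0`. -/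
theorem schwarz_lantern (r h c : ℝ) (hr : 0 < r) (hh : 0 < h) (hc : 0 < c) :
    (∀ m n : ℕ, 1 ≤ m → 2 ≤ n → ∀ j k : ℤ,
      (1 / 2) * norm3 (crossProduct
        (lanternPt r ((j : ℝ) * (h / m)) (2 * Real.pi * ((k : ℝ) + 1) / n)
          - lanternPt r ((j : ℝ) * (h / m)) (2 * Real.pi * (k : ℝ) / n))
        (lanternPt r (((j : ℝ) + 1) * (h / m)) (2 * Real.pi * ((k : ℝ) + 1 / 2) / n)
          - lanternPt r ((j : ℝ) * (h / m)) (2 * Real.pi * (k : ℝ) / n)))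
      = r * Real.sin (Real.pi / n) *
          Real.sqrt (h ^ 2 / m ^ 2 + 4 * r ^ 2 * Real.sin (Real.pi / (2 * n)) ^ 4)) ∧
    Filter.Tendsto (fun n : ℕ =>
        2 * (c * (n : ℝ) ^ 2) * (n : ℝ) * (r * Real.sin (Real.pi / n) *
          Real.sqrt (h ^ 2 / (c * (n : ℝ) ^ 2) ^ 2 +
            4 * r ^ 2 * Real.sin (Real.pi / (2 * n)) ^ 4)))
      Filter.atTop
      (nhds (2 * Real.pi * r * h * Real.sqrt (1 + c ^ 2 * r ^ 2 * Real.pi ^ 4 / (4 * h ^ 2)))) ∧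
    2 * Real.pi * r * h
      < 2 * Real.pi * r * h * Real.sqrt (1 + c ^ 2 * r ^ 2 * Real.pi ^ 4 / (4 * h ^ 2)) := by
  refine ⟨?_, ?_, ?_⟩
  · intro m n hm hn j k
    have hn0 : (0:ℝ) < n := by exact_mod_cast Nat.lt_of_lt_of_le Nat.zero_lt_two hn
    have hm0 : (0:ℝ) < m := by exact_mod_cast Nat.lt_of_lt_of_le Nat.zero_lt_one hm
    have hsin : 0 ≤ Real.sin (Real.pi / n) := by
      apply Real.sin_nonneg_of_nonneg_of_le_pi
      · positivity
      · exact div_le_self Real.pi_pos.le (by exact_mod_cast Nat.one_le_of_lt hn)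
    have e1 : 2 * Real.pi * ((k : ℝ) + 1) / n =
        2 * Real.pi * (k : ℝ) / n + 2 * (Real.pi / n) := by
      field_simp
    have e2 : 2 * Real.pi * ((k : ℝ) + 1 / 2) / n =
        2 * Real.pi * (k : ℝ) / n + Real.pi / n := by
      field_simp
    have e3 : ((j : ℝ) + 1) * (h / m) = (j : ℝ) * (h / m) + h / m := by ring
    rw [e1, e2, e3, lantern_tri r _ (h / m) _ (Real.pi / n) hr.le hsin,
      show Real.pi / (n:ℝ) / 2 = Real.pi / (2 * n) by ring, show h ^ 2 / (m:ℝ) ^ 2 = (h / m) ^ 2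
        by rw [div_pow]]
  · have hπ := lim_nsin Real.pi Real.pi_pos
    have hπ2 := lim_nsin (Real.pi / 2) (by positivity)
    have hinner : Tendsto (fun n : ℕ => h ^ 2 / c ^ 2 +
        4 * r ^ 2 * ((n : ℝ) * Real.sin (Real.pi / 2 / n)) ^ 4) atTop
        (nhds (h ^ 2 / c ^ 2 + 4 * r ^ 2 * (Real.pi / 2) ^ 4)) :=
      tendsto_const_nhds.add ((hπ2.pow 4).const_mul _)
    have hsqrt := (Real.continuous_sqrt.tendsto _).comp hinner
    have htot := (hπ.mul hsqrt).const_mul (2 * c * r)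
    have hL : 2 * c * r * (Real.pi * Real.sqrt (h ^ 2 / c ^ 2 + 4 * r ^ 2 * (Real.pi / 2) ^ 4)) =
        2 * Real.pi * r * h * Real.sqrt (1 + c ^ 2 * r ^ 2 * Real.pi ^ 4 / (4 * h ^ 2)) := by
      have e : h ^ 2 / c ^ 2 + 4 * r ^ 2 * (Real.pi / 2) ^ 4 =
          (h / c) ^ 2 * (1 + c ^ 2 * r ^ 2 * Real.pi ^ 4 / (4 * h ^ 2)) := by
        field_simp; ring
      rw [e, Real.sqrt_mul (sq_nonneg _), Real.sqrt_sq (by positivity : (0:ℝ) ≤ h / c)]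
      field_simp
    rw [hL] at htot
    apply htot.congr'
    filter_upwards [eventually_ge_atTop 1] with n hn
    have hn0 : (0:ℝ) < n := by exact_mod_cast Nat.lt_of_lt_of_le Nat.zero_lt_one hn
    have h4 : h ^ 2 / c ^ 2 + 4 * r ^ 2 * ((n : ℝ) * Real.sin (Real.pi / 2 / n)) ^ 4 =
        ((n : ℝ) ^ 2) ^ 2 * (h ^ 2 / (c * (n : ℝ) ^ 2) ^ 2 +
          4 * r ^ 2 * Real.sin (Real.pi / (2 * n)) ^ 4) := by
      rw [show Real.pi / 2 / (n : ℝ) = Real.pi / (2 * n) by ring]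
      field_simp
    simp only [Function.comp_apply]
    rw [h4, Real.sqrt_mul (sq_nonneg _), Real.sqrt_sq (sq_nonneg _)]
    ring
  · have hX : (0:ℝ) < c ^ 2 * r ^ 2 * Real.pi ^ 4 / (4 * h ^ 2) := by positivity
    have h1 : 1 < Real.sqrt (1 + c ^ 2 * r ^ 2 * Real.pi ^ 4 / (4 * h ^ 2)) := by
      have hlt : Real.sqrt 1 < Real.sqrt (1 + c ^ 2 * r ^ 2 * Real.pi ^ 4 / (4 * h ^ 2)) :=
        Real.sqrt_lt_sqrt (by norm_num) (by linarith)
      rwa [Real.sqrt_one] at hlt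
    have h2 : (0:ℝ) < 2 * Real.pi * r * h := by positivity
    nlinarith
end

section
/- For a Moutard net determined by the Gauss map of a V-hedron, the discrete Moutard equation holds with explicit coefficient: N(i1+1, i2+1) = −N(i1,i2) + μ·(N(i1+1,i2) + N(i1,i2+1)), where μ = (N(i1,i2)·(N(i1+1,i2) + N(i1,i2+1)))/(1 + N(i1+1,i2)·N(i1,i2+1)). In particular, if N(i1,i2), N(i1+1,i2), N(i1,i2+1) are unit vectors, then N(i1+1,i2+1) defined by this formula is also a unit vector. -/
open Matrix

/-- Discrete Moutard equation for the Gauss map of a V-hedron: if `n0, n1, n2` are unit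
vectors with `1 + n1·n2 ≠ 0`, `μ = (n0·(n1 + n2))/(1 + n1·n2)` and
`n3 = −n0 + μ•(n1 + n2)`, then `n3` is also a unit vector. -/
theorem discrete_moutard_unit
    (n0 n1 n2 n3 : Fin 3 → ℝ) (μ : ℝ)
    (h0 : n0 ⬝ᵥ n0 = 1) (h1 : n1 ⬝ᵥ n1 = 1) (h2 : n2 ⬝ᵥ n2 = 1)
    (hden : 1 + n1 ⬝ᵥ n2 ≠ 0)
    (hμ : μ = (n0 ⬝ᵥ (n1 + n2)) / (1 + n1 ⬝ᵥ n2))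
    (hn3 : n3 = -n0 + μ • (n1 + n2)) :
    norm3 n3 = 1 := by
  have key : n3 ⬝ᵥ n3 = 1 := by
    subst hn3
    simp only [add_dotProduct, dotProduct_add, neg_dotProduct, dotProduct_neg,
      smul_dotProduct, dotProduct_smul, smul_eq_mul, dotProduct_add, h0, h1, h2] at *
    rw [dotProduct_comm n1 n0, dotProduct_comm n2 n0, dotProduct_comm n2 n1] at *
    set a := n0 ⬝ᵥ n1
    set b := n0 ⬝ᵥ n2
    set c := n1 ⬝ᵥ n2
    subst hμ
    field_simp
    ring
  rw [norm3, key, Real.sqrt_one]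
end
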